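/- arXiv:math/0305233 — 5 statements merged into one kernel-verified Lean document; each statement's English description precedes it below -/
import Mathlib

section
/- Let T be a 3-form on an n-dimensional Euclidean vector space with orthonormal basis e_1,...,e_n, acting on spinors via Clifford multiplication. Then Σ_{k=1}^n (e_k ⌟ T)·(e_k ⌟ T) = 2σ_T − 3||T||² as elements of the Clifford algebra, where σ_T := (1/2) Σ_k (e_k ⌟ T) ∧ (e_k ⌟ T). -/
/-!
STATEMENT 1: Let `T` be a 3-form on an `n`-dimensional Euclidean vector space
with orthonormal basis `e_1, …, e_n`, acting on spinors via Clifford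
multiplication (i.e. via the standard embedding of forms into the Clifford
algebra with relations `e_i·e_j + e_j·e_i = -2δ_{ij}`). Then
`∑_{k=1}^n (e_k ⌟ T)·(e_k ⌟ T) = 2σ_T − 3‖T‖²`
as elements of the Clifford algebra, where
`σ_T := (1/2) ∑_k (e_k ⌟ T) ∧ (e_k ⌟ T)` and the products on the left are
Clifford products.

Same modelling as in Statement 0: `V = ℝⁿ`, quadratic form `Q(v) = -∑ vᵢ²`,
forms as elements of the exterior algebra, `e_k ⌟ ·` the contraction with the
`k`-th coordinate functional, and the embedding of forms into the Clifford
algebra given by the inverse of `CliffordAlgebra.equivExterior`.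
-/

noncomputable section

/-- The quadratic form `Q(v) = -∑ vᵢ²`. -/
def Q (n : ℕ) : QuadraticForm ℝ (Fin n → ℝ) :=
  QuadraticMap.weightedSumSquares ℝ (fun _ : Fin n => (-1 : ℝ))

/-- The standard embedding of exterior forms into the Clifford algebra. -/
def quantize (n : ℕ) : ExteriorAlgebra ℝ (Fin n → ℝ) ≃ₗ[ℝ] CliffordAlgebra (Q n) :=
  letI : Invertible (2 : ℝ) := invertibleOfNonzero two_ne_zero
  (CliffordAlgebra.equivExterior (Q n)).symm

/-- The orthonormal basis vector `e_i`, as an element of the exterior algebra. -/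
def e (n : ℕ) (i : Fin n) : ExteriorAlgebra ℝ (Fin n → ℝ) :=
  ExteriorAlgebra.ι ℝ (Pi.single i 1)

/-- The 3-form `T = ∑_{i<j<k} c i j k • eᵢ ∧ eⱼ ∧ e_k` with coefficients `c`. -/
def formT (n : ℕ) (c : Fin n → Fin n → Fin n → ℝ) : ExteriorAlgebra ℝ (Fin n → ℝ) :=
  ∑ i, ∑ j, ∑ k, if i < j ∧ j < k then c i j k • (e n i * e n j * e n k) else 0

/-- The interior product `e_k ⌟ ω`. -/
def interiorProd (n : ℕ) (k : Fin n) (ω : ExteriorAlgebra ℝ (Fin n → ℝ)) :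
    ExteriorAlgebra ℝ (Fin n → ℝ) :=
  CliffordAlgebra.contractLeft (Q := (0 : QuadraticForm ℝ (Fin n → ℝ)))
    (LinearMap.proj k) ω

/-- The 4-form `σ_T := (1/2) ∑_k (e_k ⌟ T) ∧ (e_k ⌟ T)`. -/
def sigmaT (n : ℕ) (c : Fin n → Fin n → Fin n → ℝ) : ExteriorAlgebra ℝ (Fin n → ℝ) :=
  (1/2 : ℝ) • ∑ k, interiorProd n k (formT n c) * interiorProd n k (formT n c)

/-- The squared norm `‖T‖² = ∑_{i<j<k} (c i j k)²`. -/
def normSqT (n : ℕ) (c : Fin n → Fin n → Fin n → ℝ) : ℝ :=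
  ∑ i, ∑ j, ∑ k, if i < j ∧ j < k then (c i j k)^2 else 0

namespace St1
open CliffordAlgebra

lemma negQ_apply (n : ℕ) (w : Fin n → ℝ) : (-(Q n)) w = ∑ i, (w i)^2 := by
  rw [QuadraticMap.neg_apply, Q, QuadraticMap.weightedSumSquares_apply]
  simp [pow_two]

/-- the bilinear form used by `quantize` -/
def B (n : ℕ) : LinearMap.BilinForm ℝ (Fin n → ℝ) :=
  -(QuadraticMap.associated (R := ℝ) (-(Q n)))

lemma Bval (n : ℕ) (u v : Fin n) :
    B n (Pi.single u 1) (Pi.single v 1) = if u = v then -1 else 0 := by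
  simp only [B, LinearMap.neg_apply, QuadraticMap.associated_apply]
  simp only [negQ_apply]
  rcases eq_or_ne u v with h | h
  · subst h
    simp only [if_pos rfl, ← Pi.single_add]
    simp [Pi.single_apply]
    norm_num
  · rw [if_neg h]
    have h1 : ∑ i, ((Pi.single u 1 + Pi.single v 1 : Fin n → ℝ) i)^2 = 2 := by
      rw [Finset.sum_eq_add_of_mem u v (Finset.mem_univ _) (Finset.mem_univ _) h]
      · simp [Pi.single_apply, h, h.symm]; norm_num
      · intro k _ hk
        simp [Pi.single_apply, Ne.symm (hk.1), Ne.symm (hk.2)]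
    rw [h1]
    rw [Finset.sum_eq_single u, Finset.sum_eq_single v] <;> intros <;>
      simp_all [Pi.single_apply]
    norm_num

lemma Qval (n : ℕ) (u : Fin n) : Q n (Pi.single u 1) = -1 := by
  have := negQ_apply n (Pi.single u 1)
  rw [QuadraticMap.neg_apply] at this
  have h2 : ∑ i, ((Pi.single u 1 : Fin n → ℝ) i)^2 = 1 := by
    rw [Finset.sum_eq_single u] <;> intros <;> simp_all [Pi.single_apply]
  linarith [this, h2]

/-- basis vectors in the Clifford algebra -/
def f (n : ℕ) (i : Fin n) : CliffordAlgebra (Q n) := ι (Q n) (Pi.single i 1)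

lemma f_sq (n : ℕ) (i : Fin n) :
    f n i * f n i = algebraMap ℝ _ (-1) := by
  rw [f, ι_sq_scalar, Qval]

lemma Qsum (n : ℕ) {u v : Fin n} (h : u ≠ v) :
    Q n (Pi.single u 1 + Pi.single v 1) = -2 := by
  have := negQ_apply n (Pi.single u 1 + Pi.single v 1)
  rw [QuadraticMap.neg_apply] at this
  have h1 : ∑ i, ((Pi.single u 1 + Pi.single v 1 : Fin n → ℝ) i)^2 = 2 := by
    rw [Finset.sum_eq_add_of_mem u v (Finset.mem_univ _) (Finset.mem_univ _) h]
    · simp [Pi.single_apply, h, h.symm]; norm_num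
    · intro k _ hk
      simp [Pi.single_apply, Ne.symm (hk.1), Ne.symm (hk.2)]
  linarith

lemma polar_val (n : ℕ) (u v : Fin n) (h : u ≠ v) :
    QuadraticMap.polar (Q n) (Pi.single u 1) (Pi.single v 1) = 0 := by
  have : QuadraticMap.polar (Q n) (Pi.single u 1) (Pi.single v 1)
      = Q n (Pi.single u 1 + Pi.single v 1) - Q n (Pi.single u 1) - Q n (Pi.single v 1) := rfl
  rw [this, Qsum n h, Qval, Qval]
  ring

lemma f_anticomm (n : ℕ) {u v : Fin n} (h : u ≠ v) :
    f n u * f n v = -(f n v * f n u) := by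
  have := ι_mul_ι_add_swap (Q := Q n) (Pi.single u 1) (Pi.single v 1)
  rw [polar_val n u v h] at this
  simp only [map_zero] at this
  rw [f, f, eq_neg_iff_add_eq_zero]
  exact this

lemma e_sq (n : ℕ) (u : Fin n) : e n u * e n u = 0 := by
  rw [e]
  exact ExteriorAlgebra.ι_sq_zero _

lemma e_anticomm (n : ℕ) (u v : Fin n) :
    e n u * e n v = -(e n v * e n u) := by
  have := ι_mul_ι_add_swap (Q := (0 : QuadraticForm ℝ (Fin n → ℝ)))
    (Pi.single u 1) (Pi.single v 1)
  rw [QuadraticMap.polar] at this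
  simp only [QuadraticMap.zero_apply, sub_zero, zero_sub, neg_zero, map_zero] at this
  rw [e, e, eq_neg_iff_add_eq_zero]
  exact this

/-- the contraction operator on the Clifford algebra -/
def κ (n : ℕ) (u : Fin n) : CliffordAlgebra (Q n) →ₗ[ℝ] CliffordAlgebra (Q n) :=
  contractLeft (Q := Q n) (B n (Pi.single u 1))

lemma quantize_ι_mul (n : ℕ) (u : Fin n) (x : ExteriorAlgebra ℝ (Fin n → ℝ)) :
    quantize n (e n u * x) = f n u * quantize n x - κ n u (quantize n x) := by
  exact changeForm_ι_mul (changeForm.neg_proof changeForm.associated_neg_proof)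
    (Pi.single u 1) x

lemma κ_f (n : ℕ) (u v : Fin n) :
    κ n u (f n v) = algebraMap ℝ _ (if u = v then -1 else 0) := by
  rw [κ, f, contractLeft_ι, Bval]

lemma κ_mul (n : ℕ) (u v : Fin n) (x : CliffordAlgebra (Q n)) :
    κ n u (f n v * x) = (if u = v then (-1:ℝ) else 0) • x - f n v * κ n u x := by
  rw [κ, f, contractLeft_ι_mul, Bval]

lemma κ_alg (n : ℕ) (u : Fin n) (r : ℝ) :
    κ n u (algebraMap ℝ _ r) = 0 := by simp [κ]

lemma quantize_e (n : ℕ) (u : Fin n) : quantize n (e n u) = f n u := by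
  exact changeForm_ι (changeForm.neg_proof changeForm.associated_neg_proof)
    (Pi.single u 1)


/-- Kronecker delta -/
def δ {n : ℕ} (u v : Fin n) : ℝ := if u = v then 1 else 0

lemma δ_comm {n : ℕ} (u v : Fin n) : δ u v = δ v u := by
  simp only [δ]; split_ifs with h1 h2 <;> simp_all [eq_comm]

lemma mul_algC {n : ℕ} (x : CliffordAlgebra (Q n)) (r : ℝ) :
    x * algebraMap ℝ _ r = r • x := by
  rw [Algebra.algebraMap_eq_smul_one, mul_smul_comm, mul_one]

lemma κ_f' (n : ℕ) (u v : Fin n) : κ n u (f n v) = -(δ u v) • 1 := by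
  rw [κ_f, Algebra.algebraMap_eq_smul_one, δ]
  split_ifs <;> norm_num

lemma κ_mul' (n : ℕ) (u v : Fin n) (x : CliffordAlgebra (Q n)) :
    κ n u (f n v * x) = -(δ u v) • x - f n v * κ n u x := by
  rw [κ_mul, δ]; split_ifs <;> norm_num

lemma quantize_e2 (n : ℕ) (u v : Fin n) :
    quantize n (e n u * e n v) = f n u * f n v + δ u v • 1 := by
  rw [quantize_ι_mul, quantize_e, κ_f']
  module

lemma κ_ff (n : ℕ) (j p q : Fin n) :
    κ n j (f n p * f n q) = -(δ j p) • f n q + δ j q • f n p := by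
  rw [κ_mul', κ_f']
  have : f n p * (-(δ j q) • (1 : CliffordAlgebra (Q n))) = -(δ j q) • f n p := by
    rw [mul_smul_comm, mul_one]
  rw [this]
  module

lemma κ_one (n : ℕ) (u : Fin n) : κ n u (1 : CliffordAlgebra (Q n)) = 0 := by
  simp [κ]

lemma quantize_e3 (n : ℕ) (l p q : Fin n) :
    quantize n (e n l * (e n p * e n q)) =
      f n l * (f n p * f n q) + δ p q • f n l + δ l p • f n q - δ l q • f n p := by
  rw [quantize_ι_mul, quantize_e2]
  simp only [map_add, map_smul, κ_ff, κ_one, smul_zero]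
  rw [mul_add, mul_smul_comm, mul_one]
  module

lemma κ_fff (n : ℕ) (j l p q : Fin n) :
    κ n j (f n l * (f n p * f n q)) =
      -(δ j l) • (f n p * f n q) + δ j p • (f n l * f n q) - δ j q • (f n l * f n p) := by
  rw [κ_mul', κ_ff, mul_add, mul_smul_comm, mul_smul_comm]
  module

lemma quantize_e4 (n : ℕ) (j l p q : Fin n) :
    quantize n (e n j * (e n l * (e n p * e n q))) =
      f n j * (f n l * (f n p * f n q))
      + δ p q • (f n j * f n l) + δ l p • (f n j * f n q) - δ l q • (f n j * f n p)
      + δ j l • (f n p * f n q) - δ j p • (f n l * f n q) + δ j q • (f n l * f n p)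
      + (δ p q * δ j l + δ l p * δ j q - δ l q * δ j p) • 1 := by
  rw [quantize_ι_mul, quantize_e3]
  simp only [map_add, map_sub, map_smul, κ_fff, κ_f']
  simp only [mul_add, mul_sub, mul_smul_comm, smul_smul]
  module


set_option linter.unusedSectionVars false
def a (c : Fin n → Fin n → Fin n → ℝ) (i j k : Fin n) : ℝ :=
  if i < j ∧ j < k then c i j k
  else if i < k ∧ k < j then -(c i k j)
  else if j < i ∧ i < k then -(c j i k)
  else if j < k ∧ k < i then c j k i
  else if k < i ∧ i < j then c k i j
  else if k < j ∧ j < i then -(c k j i)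
  else 0

lemma a_swap23 (c : Fin n → Fin n → Fin n → ℝ) (i j k : Fin n) :
    a c i j k = -(a c i k j) := by
  simp only [a]; split_ifs <;> first | ring1 | (exfalso; omega)

lemma a_swap12 (c : Fin n → Fin n → Fin n → ℝ) (i j k : Fin n) :
    a c i j k = -(a c j i k) := by
  simp only [a]; split_ifs <;> first | ring1 | (exfalso; omega)

lemma a_diag23 (c : Fin n → Fin n → Fin n → ℝ) (i j : Fin n) : a c i j j = 0 := by
  have := a_swap23 c i j j; linarith

lemma a_diag12 (c : Fin n → Fin n → Fin n → ℝ) (i j : Fin n) : a c i i j = 0 := by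
  have := a_swap12 c i i j; linarith

lemma a_sq (c : Fin n → Fin n → Fin n → ℝ) (k j l : Fin n) :
    (a c k j l)^2 = (if k < j ∧ j < l then (c k j l)^2 else 0)
      + (if k < l ∧ l < j then (c k l j)^2 else 0)
      + (if j < k ∧ k < l then (c j k l)^2 else 0)
      + (if j < l ∧ l < k then (c j l k)^2 else 0)
      + (if l < k ∧ k < j then (c l k j)^2 else 0)
      + (if l < j ∧ j < k then (c l j k)^2 else 0) := by
  simp only [a]; split_ifs <;> first | ring1 | (exfalso; omega)

variable {n : ℕ} {M : Type*} [AddCommGroup M] [Module ℝ M]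

lemma sum_fold_sym (g : Fin n → Fin n → M) (hd : ∀ u, g u u = 0)
    (hs : ∀ u v, g u v = g v u) :
    ∑ u, ∑ v, g u v = (2:ℝ) • ∑ u, ∑ v, (if u < v then g u v else 0) := by
  have key : ∀ u v : Fin n, g u v =
      (if u < v then g u v else 0) + (if v < u then g u v else 0) := by
    intro u v
    rcases lt_trichotomy u v with h | h | h
    · rw [if_pos h, if_neg (by omega), add_zero]
    · subst h; simp [hd]
    · rw [if_neg (by omega), if_pos h, zero_add]
  calc ∑ u, ∑ v, g u v
      = ∑ u, ∑ v, ((if u < v then g u v else 0) + (if v < u then g u v else 0)) := by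
        exact Finset.sum_congr rfl fun u _ => Finset.sum_congr rfl fun v _ => key u v
    _ = (∑ u, ∑ v, if u < v then g u v else 0)
        + ∑ u, ∑ v, (if v < u then g u v else 0) := by
        simp [Finset.sum_add_distrib]
    _ = (∑ u, ∑ v, if u < v then g u v else 0)
        + ∑ u, ∑ v, (if u < v then g u v else 0) := by
        congr 1
        rw [Finset.sum_comm]
        exact Finset.sum_congr rfl fun u _ => Finset.sum_congr rfl fun v _ => by
          rcases lt_or_ge u v with h | h
          · rw [if_pos h, if_pos h, hs]
          · rw [if_neg (by omega), if_neg (by omega)]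
    _ = (2:ℝ) • ∑ u, ∑ v, (if u < v then g u v else 0) := by
        rw [two_smul]

lemma sum_cancel_antisym (g : Fin n → Fin n → M)
    (ha : ∀ u v, u ≠ v → g u v = -g v u) :
    ∑ u, ∑ v, g u v = ∑ u, g u u := by
  have key : ∀ u v : Fin n, g u v =
      (if u < v then g u v else 0) + (if v < u then g u v else 0)
        + (if u = v then g u v else 0) := by
    intro u v
    rcases lt_trichotomy u v with h | h | h
    · rw [if_pos h, if_neg (by omega), if_neg (by omega)]; abel
    · subst h; simp
    · rw [if_neg (by omega), if_pos h, if_neg (by omega)]; abel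
  calc ∑ u, ∑ v, g u v
      = ((∑ u, ∑ v, if u < v then g u v else 0)
        + ∑ u, ∑ v, (if v < u then g u v else 0))
        + ∑ u, ∑ v, (if u = v then g u v else 0) := by
        rw [← Finset.sum_add_distrib, ← Finset.sum_add_distrib]
        simp_rw [← Finset.sum_add_distrib]
        exact Finset.sum_congr rfl fun u _ => Finset.sum_congr rfl fun v _ => key u v
    _ = ∑ u, g u u := by
        have h2 : ∑ u, ∑ v, (if v < u then g u v else 0)
            = -∑ u, ∑ v, (if u < v then g u v else 0) := by
          rw [Finset.sum_comm, ← Finset.sum_neg_distrib]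
          apply Finset.sum_congr rfl fun u _ => ?_
          rw [← Finset.sum_neg_distrib]
          apply Finset.sum_congr rfl fun v _ => ?_
          rcases lt_or_ge u v with h | h
          · rw [if_pos h, if_pos h, ha v u (by omega)]
          · rw [if_neg (by omega), if_neg (by omega), neg_zero]
        rw [h2, add_neg_cancel, zero_add]
        apply Finset.sum_congr rfl fun u _ => ?_
        simp


lemma ip_ι_mul (n : ℕ) (k v : Fin n) (x : ExteriorAlgebra ℝ (Fin n → ℝ)) :
    interiorProd n k (e n v * x) = δ v k • x - e n v * interiorProd n k x := by
  have h := CliffordAlgebra.contractLeft_ι_mul (Q := (0 : QuadraticForm ℝ (Fin n → ℝ)))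
    (d := LinearMap.proj k) (Pi.single v 1) x
  have hδ : (LinearMap.proj k : (Fin n → ℝ) →ₗ[ℝ] ℝ) (Pi.single v 1) = δ v k := by
    simp [LinearMap.proj_apply, Pi.single_apply, δ, eq_comm]
  rw [hδ] at h
  exact h

lemma ip_e (n : ℕ) (k v : Fin n) : interiorProd n k (e n v) = δ v k • 1 := by
  have h := CliffordAlgebra.contractLeft_ι (Q := (0 : QuadraticForm ℝ (Fin n → ℝ)))
    (d := LinearMap.proj k) (Pi.single v 1)
  have hδ : (LinearMap.proj k : (Fin n → ℝ) →ₗ[ℝ] ℝ) (Pi.single v 1) = δ v k := by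
    simp [LinearMap.proj_apply, Pi.single_apply, δ, eq_comm]
  rw [hδ] at h
  rw [interiorProd, e]
  rw [show ExteriorAlgebra.ι ℝ (Pi.single v (1:ℝ)) = CliffordAlgebra.ι (0 : QuadraticForm ℝ (Fin n → ℝ)) (Pi.single v 1) from rfl]
  rw [h, Algebra.algebraMap_eq_smul_one]

lemma ip_e3 (n : ℕ) (k i j l : Fin n) :
    interiorProd n k (e n i * (e n j * e n l)) =
      δ i k • (e n j * e n l) - δ j k • (e n i * e n l) + δ l k • (e n i * e n j) := by
  rw [ip_ι_mul, ip_ι_mul, ip_e]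
  simp only [mul_sub, mul_smul_comm, mul_one]
  module


lemma δ_self {n : ℕ} (u : Fin n) : δ u u = 1 := by simp [δ]
lemma δ_ne {n : ℕ} {u v : Fin n} (h : u ≠ v) : δ u v = 0 := by simp [δ, h]

set_option maxHeartbeats 1000000 in
lemma ip_formT (n : ℕ) (c : Fin n → Fin n → Fin n → ℝ) (k : Fin n) :
    interiorProd n k (formT n c)
      = ∑ u, ∑ v, (if u < v then a c k u v else 0) • (e n u * e n v) := by
  have ip_sum : ∀ {ι : Type} (s : Finset ι) (g : ι → ExteriorAlgebra ℝ (Fin n → ℝ)),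
      interiorProd n k (∑ i ∈ s, g i) = ∑ i ∈ s, interiorProd n k (g i) :=
    fun s g => map_sum _ _ _
  have ip_zero : interiorProd n k (0 : ExteriorAlgebra ℝ (Fin n → ℝ)) = 0 := map_zero _
  have ip_smul : ∀ (r : ℝ) (x : ExteriorAlgebra ℝ (Fin n → ℝ)),
      interiorProd n k (r • x) = r • interiorProd n k x := fun r x => map_smul _ _ _
  rw [formT]
  simp only [ip_sum, apply_ite (interiorProd n k), ip_zero, ip_smul, mul_assoc, ip_e3]
  have step : ∀ i j l : Fin n,
      (if i < j ∧ j < l then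
        c i j l • (δ i k • (e n j * e n l) - δ j k • (e n i * e n l) + δ l k • (e n i * e n j))
       else 0)
      = (if i = k then (if k < j ∧ j < l then c k j l • (e n j * e n l) else 0) else 0)
        + (if j = k then (if i < k ∧ k < l then (-(c i k l)) • (e n i * e n l) else 0) else 0)
        + (if l = k then (if i < j ∧ j < k then c i j k • (e n i * e n j) else 0) else 0) := by
    intro i j l
    by_cases hA : i = k <;> by_cases hB : j = k <;> by_cases hC : l = k <;>
      simp only [hA, hB, hC, δ_self, one_smul, if_pos rfl] <;>
      (try rw [δ_ne hA]) <;> (try rw [δ_ne hB]) <;> (try rw [δ_ne hC]) <;>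
      (try rw [if_neg hA]) <;> (try rw [if_neg hB]) <;> (try rw [if_neg hC]) <;>
      split_ifs <;>
      first
        | module
        | (exfalso; first | exact ‹False› | omega)
        | (simp only [zero_smul, smul_zero, one_smul]; module)
  simp only [step]
  simp only [Finset.sum_add_distrib]
  have colA : ∑ i : Fin n, ∑ j : Fin n, ∑ l : Fin n,
      (if i = k then (if k < j ∧ j < l then c k j l • (e n j * e n l) else 0) else 0)
      = ∑ j : Fin n, ∑ l : Fin n, (if k < j ∧ j < l then c k j l • (e n j * e n l) else 0) := by
    have inner : ∀ i : Fin n, (∑ j : Fin n, ∑ l : Fin n,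
        (if i = k then (if k < j ∧ j < l then c k j l • (e n j * e n l) else 0) else 0))
        = (if i = k then ∑ j : Fin n, ∑ l : Fin n,
            (if k < j ∧ j < l then c k j l • (e n j * e n l) else 0) else 0) := by
      intro i; rcases eq_or_ne i k with h | h <;> simp [h]
    rw [Finset.sum_congr rfl fun i _ => inner i, Finset.sum_ite_eq' Finset.univ k]
    simp
  have colB : ∑ i : Fin n, ∑ j : Fin n, ∑ l : Fin n,
      (if j = k then (if i < k ∧ k < l then (-(c i k l)) • (e n i * e n l) else 0) else 0)
      = ∑ i : Fin n, ∑ l : Fin n, (if i < k ∧ k < l then (-(c i k l)) • (e n i * e n l) else 0) := by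
    apply Finset.sum_congr rfl (fun i _ => ?_)
    have inner : ∀ j : Fin n, (∑ l : Fin n,
        (if j = k then (if i < k ∧ k < l then (-(c i k l)) • (e n i * e n l) else 0) else 0))
        = (if j = k then ∑ l : Fin n,
            (if i < k ∧ k < l then (-(c i k l)) • (e n i * e n l) else 0) else 0) := by
      intro j; rcases eq_or_ne j k with h | h <;> simp [h]
    rw [Finset.sum_congr rfl fun j _ => inner j, Finset.sum_ite_eq' Finset.univ k]
    simp
  have colC : ∑ i : Fin n, ∑ j : Fin n, ∑ l : Fin n,
      (if l = k then (if i < j ∧ j < k then c i j k • (e n i * e n j) else 0) else 0)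
      = ∑ i : Fin n, ∑ j : Fin n, (if i < j ∧ j < k then c i j k • (e n i * e n j) else 0) := by
    apply Finset.sum_congr rfl (fun i _ => ?_)
    apply Finset.sum_congr rfl (fun j _ => ?_)
    rw [Finset.sum_ite_eq' Finset.univ k]
    simp
  rw [colA, colB, colC]
  rw [← Finset.sum_add_distrib, ← Finset.sum_add_distrib]
  apply Finset.sum_congr rfl (fun u _ => ?_)
  rw [← Finset.sum_add_distrib, ← Finset.sum_add_distrib]
  apply Finset.sum_congr rfl (fun v _ => ?_)
  have e1 : (if k < u ∧ u < v then c k u v • (e n u * e n v) else 0)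
      = (if k < u ∧ u < v then c k u v else 0) • (e n u * e n v) := by
    split_ifs <;> simp
  have e2 : (if u < k ∧ k < v then (-(c u k v)) • (e n u * e n v) else 0)
      = (if u < k ∧ k < v then -(c u k v) else 0) • (e n u * e n v) := by
    split_ifs <;> simp
  have e3 : (if u < v ∧ v < k then c u v k • (e n u * e n v) else 0)
      = (if u < v ∧ v < k then c u v k else 0) • (e n u * e n v) := by
    split_ifs <;> simp
  rw [e1, e2, e3, ← add_smul, ← add_smul]
  congr 1
  simp only [a]
  split_ifs <;> first | ring1 | (exfalso; omega)


def G (n : ℕ) (c : Fin n → Fin n → Fin n → ℝ) (k : Fin n) : CliffordAlgebra (Q n) :=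
  ∑ u, ∑ v, (a c k u v) • (f n u * f n v)

def E (n : ℕ) (c : Fin n → Fin n → Fin n → ℝ) (k : Fin n) : ExteriorAlgebra ℝ (Fin n → ℝ) :=
  ∑ u, ∑ v, (a c k u v) • (e n u * e n v)

def Ntot (n : ℕ) (c : Fin n → Fin n → Fin n → ℝ) : ℝ :=
  ∑ k, ∑ u, ∑ m, (a c k u m)^2

lemma ip_formT_sym (n : ℕ) (c : Fin n → Fin n → Fin n → ℝ) (k : Fin n) :
    interiorProd n k (formT n c) = (1/2 : ℝ) • E n c k := by
  rw [ip_formT]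
  have h1 : ∀ u v : Fin n, (if u < v then a c k u v else 0) • (e n u * e n v)
      = (if u < v then a c k u v • (e n u * e n v) else 0) := by
    intro u v; split_ifs <;> simp
  simp only [h1]
  have h2 := sum_fold_sym (fun u v => a c k u v • (e n u * e n v))
    (fun u => by show a c k u u • (e n u * e n u) = 0; rw [a_diag23, zero_smul])
    (fun u v => by
      show a c k u v • (e n u * e n v) = a c k v u • (e n v * e n u)
      rcases eq_or_ne u v with h | h
      · subst h; rfl
      · rw [a_swap23, e_anticomm, neg_smul, smul_neg, neg_neg])
  rw [E, h2, smul_smul]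
  norm_num

lemma quantize_ip_formT (n : ℕ) (c : Fin n → Fin n → Fin n → ℝ) (k : Fin n) :
    quantize n (interiorProd n k (formT n c)) = (1/2 : ℝ) • G n c k := by
  rw [ip_formT_sym, map_smul, E, map_sum]
  simp only [map_sum, map_smul, quantize_e2]
  rw [G]
  congr 1
  apply Finset.sum_congr rfl fun u _ => Finset.sum_congr rfl fun v _ => ?_
  rcases eq_or_ne u v with h | h
  · subst h; rw [a_diag23, zero_smul, zero_smul]
  · rw [δ_ne h, zero_smul, add_zero]

lemma mul_expand {A : Type*} [Ring A] [Algebra ℝ A] {n : ℕ}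
    (r s : Fin n → Fin n → ℝ) (x y : Fin n → Fin n → A) :
    (∑ u, ∑ v, r u v • x u v) * (∑ u, ∑ v, s u v • y u v)
      = ∑ u, ∑ v, ∑ p, ∑ q, (r u v * s p q) • (x u v * y p q) := by
  rw [Finset.sum_mul_sum]
  apply Finset.sum_congr rfl fun u _ => ?_
  rw [Finset.sum_comm]
  apply Finset.sum_congr rfl fun v _ => ?_
  rw [Finset.sum_mul_sum]
  apply Finset.sum_congr rfl fun p _ => Finset.sum_congr rfl fun q _ => ?_
  rw [smul_mul_assoc, mul_smul_comm, smul_smul]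

lemma wick (n : ℕ) (j l p q : Fin n) :
    (f n j * f n l) * (f n p * f n q) - quantize n ((e n j * e n l) * (e n p * e n q))
    = -((δ p q) • (f n j * f n l)) - δ l p • (f n j * f n q) + δ l q • (f n j * f n p)
      - δ j l • (f n p * f n q) + δ j p • (f n l * f n q) - δ j q • (f n l * f n p)
      - (δ p q * δ j l + δ l p * δ j q - δ l q * δ j p) • 1 := by
  rw [mul_assoc (e n j), mul_assoc (f n j), quantize_e4]
  module


section helpers
variable {n : ℕ} {M : Type*} [AddCommGroup M] [Module ℝ M]

lemma collapse_inner (t : Fin n) (w : Fin n → M) : ∑ x, δ t x • w x = w t := by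
  simp [δ, ite_smul]

lemma pull2 (r : Fin n → Fin n → ℝ) (X : M) :
    ∑ k : Fin n, ∑ m : Fin n, r k m • X = (∑ k : Fin n, ∑ m : Fin n, r k m) • X := by
  rw [Finset.sum_smul]
  exact Finset.sum_congr rfl fun k _ => by rw [Finset.sum_smul]

lemma reorderA (h : Fin n → Fin n → Fin n → Fin n → M) :
    ∑ k, ∑ u, ∑ m, ∑ v, h k u m v = ∑ u, ∑ v, ∑ k, ∑ m, h k u m v := by
  rw [Finset.sum_comm]
  apply Finset.sum_congr rfl fun u _ => ?_
  calc ∑ k, ∑ m, ∑ v, h k u m v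
      = ∑ k, ∑ v, ∑ m, h k u m v :=
        Finset.sum_congr rfl fun k _ => Finset.sum_comm
    _ = ∑ v, ∑ k, ∑ m, h k u m v := Finset.sum_comm

lemma reorderB (h : Fin n → Fin n → Fin n → Fin n → M) :
    ∑ k, ∑ m, ∑ u, ∑ v, h k m u v = ∑ u, ∑ v, ∑ k, ∑ m, h k m u v := by
  calc ∑ k, ∑ m, ∑ u, ∑ v, h k m u v
      = ∑ k, ∑ u, ∑ m, ∑ v, h k m u v :=
        Finset.sum_congr rfl fun k _ => Finset.sum_comm
    _ = ∑ u, ∑ v, ∑ k, ∑ m, h k m u v := reorderA (fun k u m v => h k m u v)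

end helpers

lemma sum_a_sq (n : ℕ) (c : Fin n → Fin n → Fin n → ℝ) (u : Fin n) :
    True := trivial

lemma core (n : ℕ) (c : Fin n → Fin n → Fin n → ℝ) :
    ∑ u, ∑ v, (∑ k, ∑ m, a c k u m * a c k v m) • (f n u * f n v)
      = -(Ntot n c • (1 : CliffordAlgebra (Q n))) := by
  rw [sum_cancel_antisym (fun u v => (∑ k, ∑ m, a c k u m * a c k v m) • (f n u * f n v))
    (fun u v huv => by
      show (∑ k, ∑ m, a c k u m * a c k v m) • (f n u * f n v)
        = -((∑ k, ∑ m, a c k v m * a c k u m) • (f n v * f n u))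
      rw [f_anticomm n huv]
      rw [show (∑ k, ∑ m : Fin n, a c k v m * a c k u m)
          = ∑ k, ∑ m : Fin n, a c k u m * a c k v m from
        Finset.sum_congr rfl fun k _ => Finset.sum_congr rfl fun m _ => mul_comm _ _]
      rw [smul_neg])]
  have hu : ∀ u : Fin n, (∑ k, ∑ m, a c k u m * a c k u m) • (f n u * f n u)
      = -(((∑ k, ∑ m, (a c k u m)^2)) • (1 : CliffordAlgebra (Q n))) := by
    intro u
    rw [f_sq, Algebra.algebraMap_eq_smul_one, smul_smul]
    rw [show (∑ k, ∑ m : Fin n, a c k u m * a c k u m)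
        = ∑ k, ∑ m : Fin n, (a c k u m)^2 from
      Finset.sum_congr rfl fun k _ => Finset.sum_congr rfl fun m _ => (pow_two _).symm]
    rw [mul_neg_one, neg_smul]
  simp only [hu]
  rw [Finset.sum_neg_distrib, ← Finset.sum_smul]
  congr 2
  rw [Finset.sum_comm]
  rfl

lemma pieceS2 (n : ℕ) (c : Fin n → Fin n → Fin n → ℝ) :
    ∑ k, ∑ j, ∑ l, ∑ p, ∑ q, (a c k j l * a c k p q) • (δ l p • (f n j * f n q))
      = Ntot n c • (1 : CliffordAlgebra (Q n)) := by
  have hpt : ∀ (k j l p q : Fin n),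
      (a c k j l * a c k p q) • (δ l p • (f n j * f n q))
      = δ l p • ((a c k j l * a c k p q) • (f n j * f n q)) := by
    intro k j l p q
    rw [smul_smul, smul_smul, mul_comm]
  simp only [hpt, ← Finset.smul_sum, collapse_inner]
  have hc : ∀ (k j l q : Fin n), (a c k j l * a c k l q) • (f n j * f n q)
      = -((a c k j l * a c k q l) • (f n j * f n q)) := by
    intro k j l q
    rw [a_swap23 c k l q]
    rw [← neg_smul]
    ring_nf
  simp only [hc, Finset.sum_neg_distrib]
  rw [reorderA (fun k u m v => (a c k u m * a c k v m) • (f n u * f n v))]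
  simp only [pull2]
  rw [core]
  rw [neg_neg]

lemma pieceS3 (n : ℕ) (c : Fin n → Fin n → Fin n → ℝ) :
    ∑ k, ∑ j, ∑ l, ∑ p, ∑ q, (a c k j l * a c k p q) • (δ l q • (f n j * f n p))
      = -(Ntot n c • (1 : CliffordAlgebra (Q n))) := by
  have hpt : ∀ (k j l p q : Fin n),
      (a c k j l * a c k p q) • (δ l q • (f n j * f n p))
      = δ l q • ((a c k j l * a c k p q) • (f n j * f n p)) := by
    intro k j l p q
    rw [smul_smul, smul_smul, mul_comm]
  simp only [hpt, collapse_inner]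
  rw [reorderA (fun k u m v => (a c k u m * a c k v m) • (f n u * f n v))]
  simp only [pull2]
  rw [core]

lemma pieceS5 (n : ℕ) (c : Fin n → Fin n → Fin n → ℝ) :
    ∑ k, ∑ j, ∑ l, ∑ p, ∑ q, (a c k j l * a c k p q) • (δ j p • (f n l * f n q))
      = -(Ntot n c • (1 : CliffordAlgebra (Q n))) := by
  have hpt : ∀ (k j l p q : Fin n),
      (a c k j l * a c k p q) • (δ j p • (f n l * f n q))
      = δ j p • ((a c k j l * a c k p q) • (f n l * f n q)) := by
    intro k j l p q
    rw [smul_smul, smul_smul, mul_comm]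
  simp only [hpt, ← Finset.smul_sum, collapse_inner]
  have hc : ∀ (k j l q : Fin n), (a c k j l * a c k j q) • (f n l * f n q)
      = (a c k l j * a c k q j) • (f n l * f n q) := by
    intro k j l q
    rw [a_swap23 c k l j, a_swap23 c k q j]
    ring_nf
  refine (Finset.sum_congr rfl fun k _ => Finset.sum_congr rfl fun j _ =>
    Finset.sum_congr rfl fun l _ => Finset.sum_congr rfl fun q _ => hc k j l q).trans ?_
  rw [reorderB (fun k m u v => (a c k u m * a c k v m) • (f n u * f n v))]
  simp only [pull2]
  rw [core]

lemma pieceS6 (n : ℕ) (c : Fin n → Fin n → Fin n → ℝ) :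
    ∑ k, ∑ j, ∑ l, ∑ p, ∑ q, (a c k j l * a c k p q) • (δ j q • (f n l * f n p))
      = Ntot n c • (1 : CliffordAlgebra (Q n)) := by
  have hpt : ∀ (k j l p q : Fin n),
      (a c k j l * a c k p q) • (δ j q • (f n l * f n p))
      = δ j q • ((a c k j l * a c k p q) • (f n l * f n p)) := by
    intro k j l p q
    rw [smul_smul, smul_smul, mul_comm]
  simp only [hpt, ← Finset.smul_sum, collapse_inner]
  have hc : ∀ (k j l p : Fin n), (a c k j l * a c k p j) • (f n l * f n p)
      = -((a c k l j * a c k p j) • (f n l * f n p)) := by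
    intro k j l p
    rw [a_swap23 c k l j, ← neg_smul]
    ring_nf
  simp only [hc, Finset.sum_neg_distrib]
  rw [reorderB (fun k m u v => (a c k u m * a c k v m) • (f n u * f n v))]
  simp only [pull2]
  rw [core, neg_neg]


lemma pieceZ1 (n : ℕ) (c : Fin n → Fin n → Fin n → ℝ) :
    ∑ k, ∑ j, ∑ l, ∑ p, ∑ q, (a c k j l * a c k p q) • (δ p q • (f n j * f n l))
      = 0 := by
  have hpt : ∀ (k j l p q : Fin n),
      (a c k j l * a c k p q) • (δ p q • (f n j * f n l))
      = δ p q • ((a c k j l * a c k p q) • (f n j * f n l)) := by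
    intro k j l p q
    rw [smul_smul, smul_smul, mul_comm]
  simp only [hpt, collapse_inner, a_diag23, mul_zero, zero_smul, Finset.sum_const_zero]

lemma pieceZ4 (n : ℕ) (c : Fin n → Fin n → Fin n → ℝ) :
    ∑ k, ∑ j, ∑ l, ∑ p, ∑ q, (a c k j l * a c k p q) • (δ j l • (f n p * f n q))
      = 0 := by
  have hpt : ∀ (k j l p q : Fin n),
      (a c k j l * a c k p q) • (δ j l • (f n p * f n q))
      = δ j l • ((a c k j l * a c k p q) • (f n p * f n q)) := by
    intro k j l p q
    rw [smul_smul, smul_smul, mul_comm]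
  simp only [hpt, ← Finset.smul_sum, collapse_inner, a_diag23, zero_mul, zero_smul,
    Finset.sum_const_zero]

lemma pieceD7 (n : ℕ) (c : Fin n → Fin n → Fin n → ℝ) :
    ∑ k, ∑ j, ∑ l, ∑ p, ∑ q, (a c k j l * a c k p q) • ((δ p q * δ j l) • (1 : CliffordAlgebra (Q n)))
      = 0 := by
  have hpt : ∀ (k j l p q : Fin n),
      (a c k j l * a c k p q) • ((δ p q * δ j l) • (1 : CliffordAlgebra (Q n)))
      = δ p q • ((a c k j l * a c k p q * δ j l) • (1 : CliffordAlgebra (Q n))) := by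
    intro k j l p q
    rw [smul_smul, smul_smul]
    congr 1
    ring
  simp only [hpt, collapse_inner, a_diag23, mul_zero, zero_mul, zero_smul,
    Finset.sum_const_zero]

lemma pieceD8 (n : ℕ) (c : Fin n → Fin n → Fin n → ℝ) :
    ∑ k, ∑ j, ∑ l, ∑ p, ∑ q, (a c k j l * a c k p q) • ((δ l p * δ j q) • (1 : CliffordAlgebra (Q n)))
      = -(Ntot n c • (1 : CliffordAlgebra (Q n))) := by
  have hpt : ∀ (k j l p q : Fin n),
      (a c k j l * a c k p q) • ((δ l p * δ j q) • (1 : CliffordAlgebra (Q n)))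
      = δ l p • (δ j q • ((a c k j l * a c k p q) • (1 : CliffordAlgebra (Q n)))) := by
    intro k j l p q
    rw [smul_smul, smul_smul, smul_smul]
    congr 1
    ring
  simp only [hpt, ← Finset.smul_sum, collapse_inner]
  have hc : ∀ (k j l : Fin n), (a c k j l * a c k l j) • (1 : CliffordAlgebra (Q n))
      = -(((a c k j l)^2) • (1 : CliffordAlgebra (Q n))) := by
    intro k j l
    rw [a_swap23 c k l j, ← neg_smul]
    congr 1
    ring
  refine ((Finset.sum_congr rfl fun k _ => Finset.sum_congr rfl fun j _ =>
    Finset.sum_congr rfl fun l _ => hc k j l).trans ?_)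
  simp only [Finset.sum_neg_distrib, ← Finset.sum_smul]
  rfl

lemma pieceD9 (n : ℕ) (c : Fin n → Fin n → Fin n → ℝ) :
    ∑ k, ∑ j, ∑ l, ∑ p, ∑ q, (a c k j l * a c k p q) • ((δ l q * δ j p) • (1 : CliffordAlgebra (Q n)))
      = Ntot n c • (1 : CliffordAlgebra (Q n)) := by
  have hpt : ∀ (k j l p q : Fin n),
      (a c k j l * a c k p q) • ((δ l q * δ j p) • (1 : CliffordAlgebra (Q n)))
      = δ j p • (δ l q • ((a c k j l * a c k p q) • (1 : CliffordAlgebra (Q n)))) := by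
    intro k j l p q
    rw [smul_smul, smul_smul, smul_smul]
    congr 1
    ring
  simp only [hpt, ← Finset.smul_sum, collapse_inner]
  have hc : ∀ (k j l : Fin n), (a c k j l * a c k j l) • (1 : CliffordAlgebra (Q n))
      = ((a c k j l)^2) • (1 : CliffordAlgebra (Q n)) := by
    intro k j l
    rw [pow_two]
  refine ((Finset.sum_congr rfl fun k _ => Finset.sum_congr rfl fun j _ =>
    Finset.sum_congr rfl fun l _ => hc k j l).trans ?_)
  simp only [← Finset.sum_smul]
  rfl


lemma Ntot_eq (n : ℕ) (c : Fin n → Fin n → Fin n → ℝ) :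
    Ntot n c = 6 * normSqT n c := by
  rw [Ntot]
  simp only [a_sq]
  simp only [Finset.sum_add_distrib]
  have e1 : (∑ k : Fin n, ∑ j : Fin n, ∑ l : Fin n,
      if k < j ∧ j < l then (c k j l)^2 else 0) = normSqT n c := rfl
  have e2 : (∑ k : Fin n, ∑ j : Fin n, ∑ l : Fin n,
      if k < l ∧ l < j then (c k l j)^2 else 0) = normSqT n c := by
    rw [Finset.sum_congr rfl fun k _ => Finset.sum_comm]
    rfl
  have e3 : (∑ k : Fin n, ∑ j : Fin n, ∑ l : Fin n,
      if j < k ∧ k < l then (c j k l)^2 else 0) = normSqT n c := by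
    rw [Finset.sum_comm]
    rfl
  have e4 : (∑ k : Fin n, ∑ j : Fin n, ∑ l : Fin n,
      if j < l ∧ l < k then (c j l k)^2 else 0) = normSqT n c := by
    rw [Finset.sum_comm]
    rw [Finset.sum_congr rfl fun j _ => Finset.sum_comm]
    rfl
  have e5 : (∑ k : Fin n, ∑ j : Fin n, ∑ l : Fin n,
      if l < k ∧ k < j then (c l k j)^2 else 0) = normSqT n c := by
    rw [Finset.sum_congr rfl fun k _ => Finset.sum_comm, Finset.sum_comm]
    rfl
  have e6 : (∑ k : Fin n, ∑ j : Fin n, ∑ l : Fin n,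
      if l < j ∧ j < k then (c l j k)^2 else 0) = normSqT n c := by
    rw [Finset.sum_comm]
    rw [Finset.sum_congr rfl fun j _ => Finset.sum_comm]
    rw [Finset.sum_comm]
    rfl
  rw [e1, e2, e3, e4, e5, e6]
  ring

set_option maxHeartbeats 1000000 in
lemma main_diff (n : ℕ) (c : Fin n → Fin n → Fin n → ℝ) :
    (∑ k, G n c k * G n c k) - ∑ k, quantize n (E n c k * E n c k)
      = (-(2 * Ntot n c)) • (1 : CliffordAlgebra (Q n)) := by
  rw [← Finset.sum_sub_distrib]
  have hk : ∀ k : Fin n, G n c k * G n c k - quantize n (E n c k * E n c k)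
      = ∑ j, ∑ l, ∑ p, ∑ q, (a c k j l * a c k p q) •
          ((f n j * f n l) * (f n p * f n q)
            - quantize n ((e n j * e n l) * (e n p * e n q))) := by
    intro k
    rw [G, E, mul_expand, mul_expand]
    simp only [map_sum, map_smul, smul_sub, Finset.sum_sub_distrib]
  simp only [hk, wick]
  simp only [add_smul, sub_smul, smul_sub, smul_add, smul_neg]
  simp only [Finset.sum_sub_distrib, Finset.sum_add_distrib, Finset.sum_neg_distrib]
  rw [pieceZ1 n c, pieceS2 n c, pieceS3 n c, pieceZ4 n c, pieceS5 n c, pieceS6 n c,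
    pieceD7 n c, pieceD8 n c, pieceD9 n c]
  module

theorem sum_contraction_clifford_squares' (n : ℕ) (c : Fin n → Fin n → Fin n → ℝ) :
    ∑ k, quantize n (interiorProd n k (formT n c)) *
        quantize n (interiorProd n k (formT n c)) =
      (2 : ℝ) • quantize n (sigmaT n c) -
        algebraMap ℝ (CliffordAlgebra (Q n)) (3 * normSqT n c) := by
  have hL : ∀ k : Fin n, quantize n (interiorProd n k (formT n c)) *
      quantize n (interiorProd n k (formT n c)) = (1/4 : ℝ) • (G n c k * G n c k) := by
    intro k
    rw [quantize_ip_formT, smul_mul_assoc, mul_smul_comm, smul_smul]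
    norm_num
  have hE : ∀ k : Fin n, interiorProd n k (formT n c) * interiorProd n k (formT n c)
      = (1/4 : ℝ) • (E n c k * E n c k) := by
    intro k
    rw [ip_formT_sym, smul_mul_assoc, mul_smul_comm, smul_smul]
    norm_num
  have hσ : (2 : ℝ) • quantize n (sigmaT n c)
      = (1/4 : ℝ) • ∑ k, quantize n (E n c k * E n c k) := by
    rw [sigmaT]
    simp only [hE]
    rw [← Finset.smul_sum, map_smul, map_smul, map_sum, smul_smul, smul_smul]
    norm_num
  simp only [hL]
  rw [← Finset.smul_sum, hσ]
  have hmd := main_diff n c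
  have : (∑ k, G n c k * G n c k)
      = (∑ k, quantize n (E n c k * E n c k)) + (-(2 * Ntot n c)) • (1 : CliffordAlgebra (Q n)) := by
    rw [← hmd]; abel
  rw [this]
  rw [smul_add, smul_smul]
  rw [Ntot_eq]
  rw [Algebra.algebraMap_eq_smul_one]
  rw [sub_eq_add_neg, ← neg_smul]
  congr 2
  ring

end St1

/-- `∑_k (e_k ⌟ T)·(e_k ⌟ T) = 2σ_T − 3‖T‖²` in the Clifford
algebra (the products on the left being Clifford products). -/
theorem sum_contraction_clifford_squares (n : ℕ) (c : Fin n → Fin n → Fin n → ℝ) :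
    ∑ k, quantize n (interiorProd n k (formT n c)) *
        quantize n (interiorProd n k (formT n c)) =
      (2 : ℝ) • quantize n (sigmaT n c) -
        algebraMap ℝ (CliffordAlgebra (Q n)) (3 * normSqT n c) := by
  exact St1.sum_contraction_clifford_squares' n c
end
end

section
/- Let (M^n,g,∇) be a compact Riemannian spin manifold with ∇-parallel skew-symmetric torsion T. If the kernel of the Dirac operator D^{1/3} is non-trivial, then max{μ² : μ ∈ Spec(T)} ≥ (4n/(n−1))·Scal^g_min, where Scal^g_min is the minimum of the Riemannian scalar curvature. -/
/-!
STATEMENT 7: Let `(Mⁿ,g,∇)` be a compact Riemannian spin manifold with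
`∇`-parallel skew-symmetric torsion `T`. If the kernel of the Dirac operator
`D^{1/3}` is non-trivial, then
`max{μ² : μ ∈ Spec(T)} ≥ (4n/(n−1))·Scal^g_min`,
where `Scal^g_min` is the minimum of the Riemannian scalar curvature.

Modelling: `T` acts on the spinor bundle as a parallel symmetric endomorphism
(preserving `Ker D^{1/3}`); if `D^{1/3}ψ = 0` and `Tψ = μψ` then
`D^gψ = −(μ/4)ψ` (since `D^{1/3} = D^g + T/4`); Friedrich's eigenvalue estimate
states that every eigenvalue `λ` of `D^g` on a compact spin `n`-manifold
satisfies `λ² ≥ (n/(4(n−1)))·Scal^g_min`.  The kernel of the elliptic operator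
`D^{1/3}` is finite-dimensional.  The conclusion is stated as the existence of
an eigenvalue `μ` of `T` with `μ² ≥ (4n/(n−1))·Scal^g_min`, which for the
finite spectrum of `T` is equivalent to the stated bound on the maximum. -/

open scoped RealInnerProductSpace

/-- If `Ker D^{1/3} ≠ 0`, then some eigenvalue `μ` of `T`
satisfies `μ² ≥ (4n/(n−1))·Scal^g_min`. -/
theorem torsion_eigenvalue_bound_of_kernel
    {S : Type*} [NormedAddCommGroup S] [InnerProductSpace ℝ S]
    (n : ℕ) (hn : 2 ≤ n)
    (Dg T D13 : S →ₗ[ℝ] S) (scalMin : ℝ)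
    (hD13 : D13 = Dg + (1/4 : ℝ) • T)
    -- `T` is a symmetric endomorphism of the spinor bundle:
    (hTsym : ∀ φ ψ : S, ⟪T φ, ψ⟫ = ⟪φ, T ψ⟫)
    -- `T` is parallel, hence preserves the kernel of `D^{1/3}`:
    (hTker : ∀ ψ : S, D13 ψ = 0 → D13 (T ψ) = 0)
    -- ellipticity on a compact manifold: `Ker D^{1/3}` is finite-dimensional:
    (hfin : FiniteDimensional ℝ (LinearMap.ker D13))
    -- Friedrich's estimate for the eigenvalues of the Riemannian Dirac operator:
    (hFriedrich : ∀ l : ℝ, Module.End.HasEigenvalue Dg l →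
      (n / (4 * (n - 1)) : ℝ) * scalMin ≤ l^2)
    -- the kernel of `D^{1/3}` is non-trivial:
    (hker : LinearMap.ker D13 ≠ ⊥) :
    ∃ μ : ℝ, Module.End.HasEigenvalue T μ ∧
      ((4 * n) / (n - 1) : ℝ) * scalMin ≤ μ^2 := by
  classical
  set K := LinearMap.ker D13 with hK
  have hmap : ∀ x ∈ K, T x ∈ K := fun x hx => hTker x hx
  let T' : K →ₗ[ℝ] K := T.restrict hmap
  have hT'sym : T'.IsSymmetric := by
    intro x y
    exact hTsym x y
  have hfr : 0 < Module.finrank ℝ K := by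
    have : Nontrivial K := Submodule.nontrivial_iff_ne_bot.mpr hker
    exact Module.finrank_pos
  obtain ⟨i⟩ : Nonempty (Fin (Module.finrank ℝ K)) := ⟨⟨0, hfr⟩⟩
  set μ := hT'sym.eigenvalues rfl i with hμ
  have hev := hT'sym.hasEigenvector_eigenvectorBasis rfl i
  set v := hT'sym.eigenvectorBasis rfl i with hv
  have hvne : (v : S) ≠ 0 := fun h => hev.2 (Subtype.ext h)
  have hTv : T (v : S) = μ • (v : S) := by
    have := congrArg (Subtype.val : K → S) (Module.End.mem_eigenspace_iff.mp hev.1)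
    simpa [T', LinearMap.restrict_apply] using this
  have hD13v : D13 (v : S) = 0 := v.2
  have hDgv : Dg (v : S) = (-(μ/4)) • (v : S) := by
    have : D13 (v : S) = Dg (v : S) + (1/4 : ℝ) • T (v : S) := by
      rw [hD13]; simp
    rw [hD13v, hTv] at this
    have h := this.symm
    rw [smul_smul] at h
    have : Dg (v : S) = -((1/4 * μ) • (v : S)) := by linear_combination (norm := module) h
    rw [this]; module
  have hDgEig : Module.End.HasEigenvalue Dg (-(μ/4)) :=
    Module.End.hasEigenvalue_of_hasEigenvector
      ⟨Module.End.mem_eigenspace_iff.mpr hDgv, hvne⟩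
  have hF := hFriedrich _ hDgEig
  refine ⟨μ, Module.End.hasEigenvalue_of_hasEigenvector
      ⟨Module.End.mem_eigenspace_iff.mpr hTv, hvne⟩, ?_⟩
  have hn1 : (0 : ℝ) < (n : ℝ) - 1 := by
    have : (2 : ℝ) ≤ (n : ℝ) := by exact_mod_cast hn
    linarith
  have hsq : (-(μ/4))^2 = μ^2 / 16 := by ring
  rw [hsq] at hF
  have h16 : 16 * ((n : ℝ) / (4 * ((n : ℝ) - 1)) * scalMin) ≤ 16 * (μ^2 / 16) := by
    linarith
  calc ((4 * n) / (n - 1) : ℝ) * scalMin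
      = 16 * ((n : ℝ) / (4 * ((n : ℝ) - 1)) * scalMin) := by
        field_simp; ring
    _ ≤ 16 * (μ^2 / 16) := h16
    _ = μ^2 := by ring
end

section
/- In the Clifford algebra Cl(5) with T = 2(e₁₂ + e₃₄)·e₅, the volume element e₁₂₃₄ acts as +1 on the eigenspace of T for eigenvalue 0, and as −1 on the eigenspaces of T for eigenvalues ±4, in the spin representation Δ₅. -/
/-!
STATEMENT 9: In the Clifford algebra `Cl(5)` with `T = 2(e₁₂ + e₃₄)·e₅`, the
volume element `e₁₂₃₄` acts as `+1` on the eigenspace of `T` for eigenvalue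
`0`, and as `−1` on the eigenspaces of `T` for eigenvalues `±4`, in the spin
representation `Δ₅`.

Modelling: `Δ₅ ≅ ℂ⁴` is a complex vector space `W` on which Clifford
generators `e₁,…,e₅` act as endomorphisms `u 0,…,u 4` with
`eᵢ·eⱼ + eⱼ·eᵢ = −2δᵢⱼ`; `T := 2(e₁e₂ + e₃e₄)e₅` and `e₁₂₃₄ := e₁e₂e₃e₄` act
as endomorphisms of `Δ₅`. -/

/-- `e₁₂₃₄ = +1` on the `0`-eigenspace of `T` and `e₁₂₃₄ = −1`
on the `(±4)`-eigenspaces of `T` in `Δ₅`. -/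
theorem volume_element_on_torsion_eigenspaces
    {W : Type*} [AddCommGroup W] [Module ℂ W]
    (hdim : Module.finrank ℂ W = 4)
    (u : Fin 5 → Module.End ℂ W)
    (hrel : ∀ i j, u i * u j + u j * u i = if i = j then (-2 : ℂ) • 1 else 0)
    (T E : Module.End ℂ W)
    (hT : T = (2 : ℂ) • ((u 0 * u 1 + u 2 * u 3) * u 4))
    (hE : E = u 0 * u 1 * u 2 * u 3) :
    (∀ ψ : W, T ψ = 0 → E ψ = ψ) ∧
    (∀ ψ : W, T ψ = (4 : ℂ) • ψ → E ψ = -ψ) ∧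
    (∀ ψ : W, T ψ = (-4 : ℂ) • ψ → E ψ = -ψ) := by
  have hsq : ∀ i, u i * u i = (-1 : ℂ) • 1 := by
    intro i
    have h := hrel i i
    simp only [if_pos rfl] at h
    have h2 : (2 : ℂ) • (u i * u i) = (-2 : ℂ) • 1 := by
      rw [two_smul]; exact h
    have h3 := congrArg (fun x => ((2 : ℂ)⁻¹) • x) h2
    simpa [smul_smul] using h3
  have hanti : ∀ i j, i ≠ j → u i * u j = -(u j * u i) := fun i j hij => by
    have h := hrel i j
    simp only [if_neg hij] at h
    exact eq_neg_of_add_eq_zero_left h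
  have sw : ∀ i j, i ≠ j → ∀ x : Module.End ℂ W,
      u i * (u j * x) = -(u j * (u i * x)) := fun i j hij x => by
    rw [← mul_assoc, hanti i j hij, neg_mul, mul_assoc]
  have sqx : ∀ i, ∀ x : Module.End ℂ W, u i * (u i * x) = (-1 : ℂ) • x :=
    fun i x => by rw [← mul_assoc, hsq, smul_mul_assoc, one_mul]
  have key : T * T = (8 : ℂ) • 1 - (8 : ℂ) • E := by
    subst hT hE
    simp only [smul_mul_assoc, mul_smul_comm, add_mul, mul_add, mul_assoc]
    simp only [sw 1 0 (by decide), sw 2 0 (by decide), sw 2 1 (by decide),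
      sw 3 0 (by decide), sw 3 1 (by decide), sw 3 2 (by decide),
      sw 4 0 (by decide), sw 4 1 (by decide), sw 4 2 (by decide),
      sw 4 3 (by decide),
      hanti 1 0 (by decide), hanti 2 0 (by decide), hanti 2 1 (by decide),
      hanti 3 0 (by decide), hanti 3 1 (by decide), hanti 3 2 (by decide),
      hanti 4 0 (by decide), hanti 4 1 (by decide), hanti 4 2 (by decide),
      hanti 4 3 (by decide),
      sqx 0, sqx 1, sqx 2, sqx 3, sqx 4,
      hsq 0, hsq 1, hsq 2, hsq 3, hsq 4,
      mul_neg, neg_neg, mul_smul_comm, smul_smul, mul_one]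
    module
  have keyψ : ∀ ψ : W, T (T ψ) = (8 : ℂ) • ψ - (8 : ℂ) • E ψ := by
    intro ψ
    have := congrArg (fun f : Module.End ℂ W => f ψ) key
    simpa using this
  refine ⟨fun ψ hψ => ?_, fun ψ hψ => ?_, fun ψ hψ => ?_⟩
  · have h := keyψ ψ
    rw [hψ] at h
    simp only [map_zero] at h
    have : (8 : ℂ) • E ψ = (8 : ℂ) • ψ := by
      rw [eq_comm, sub_eq_zero] at h; exact h.symm
    exact smul_right_injective W (by norm_num) this
  · have h := keyψ ψ
    rw [hψ, map_smul, hψ] at h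
    have : (8 : ℂ) • E ψ = (8 : ℂ) • (-ψ) := by
      rw [smul_smul] at h
      rw [smul_neg]
      linear_combination (norm := module) h
    exact smul_right_injective W (by norm_num) this
  · have h := keyψ ψ
    rw [hψ, map_smul, hψ] at h
    have : (8 : ℂ) • E ψ = (8 : ℂ) • (-ψ) := by
      rw [smul_smul] at h
      rw [smul_neg]
      linear_combination (norm := module) h
    exact smul_right_injective W (by norm_num) this
end

section
/- On a simply-connected compact 5-dimensional Sasakian–Einstein manifold (Scal^g = 20), the two Riemannian Killing spinors ψ₁, ψ₂ with ∇^g_X ψ_i = ±(1/2)X·ψ_i satisfy Ω(ψ_i) = −(3/4)ψ_i, where Ω = (D^{1/3})² − 3. In particular the Casimir operator of a Sasakian–Einstein 5-manifold has negative eigenvalues. -/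
/-!
STATEMENT 13: On a simply-connected compact 5-dimensional Sasakian–Einstein
manifold (`Scal^g = 20`), the two Riemannian Killing spinors `ψ₁, ψ₂` with
`∇^g_X ψᵢ = ±(1/2)X·ψᵢ` satisfy `Ω(ψᵢ) = −(3/4)ψᵢ`, where
`Ω = (D^{1/3})² − 3`.  In particular the Casimir operator of a
Sasakian–Einstein 5-manifold has negative eigenvalues.

Modelling: the space of spinor fields is a real vector space `S`; the Killing
spinor equations imply `D^gψ₁ = −(5/2)ψ₁`, `T·ψ₁ = 4ψ₁` and `D^gψ₂ = (5/2)ψ₂`,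
`T·ψ₂ = −4ψ₂` (these are the properties we use, quoted from [FK]);
`D^{1/3} = D^g + (1/4)T`; Killing spinors are parallel for the connections
`∇^± = ∇^g ∓ (1/2)X·`, so each `ψᵢ` is an eigenspinor of `D^{1/3}`; `Ω = (D^{1/3})² − (1/16)(2·20 + 8) = (D^{1/3})² − 3`. -/

/-- For the Killing spinors `ψ₁, ψ₂` of a compact
Sasakian–Einstein 5-manifold, `Ωψᵢ = −(3/4)ψᵢ`; in particular `−3/4 < 0` is an
eigenvalue of `Ω`. -/
theorem casimir_negative_eigenvalue_sasaki_einstein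
    {S : Type*} [AddCommGroup S] [Module ℝ S]
    (Dg T D13 Ω : S →ₗ[ℝ] S)
    (hD13 : D13 = Dg + (1/4 : ℝ) • T)
    (hΩ : Ω = D13 ∘ₗ D13 - (3 : ℝ) • LinearMap.id)
    (ψ₁ ψ₂ : S) (hψ₁ : ψ₁ ≠ 0)
    -- the Killing spinor `ψ₁` (`∇^g_X ψ₁ = −(1/2)X·ψ₁`):
    (hD1 : Dg ψ₁ = (-(5/2) : ℝ) • ψ₁) (hT1 : T ψ₁ = (4 : ℝ) • ψ₁)
    -- the Killing spinor `ψ₂` (`∇^g_X ψ₂ = (1/2)X·ψ₂`):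
    (hD2 : Dg ψ₂ = ((5/2) : ℝ) • ψ₂) (hT2 : T ψ₂ = (-4 : ℝ) • ψ₂)
    (hDT2 : Dg (T ψ₂) = (-4 : ℝ) • Dg ψ₂) (hTD2 : T (Dg ψ₂) = ((5/2) : ℝ) • T ψ₂) :
    Ω ψ₁ = (-(3/4) : ℝ) • ψ₁ ∧ Ω ψ₂ = (-(3/4) : ℝ) • ψ₂ ∧
    Module.End.HasEigenvalue Ω (-(3/4) : ℝ) := by
  have e1 : D13 ψ₁ = (-(3/2) : ℝ) • ψ₁ := by
    rw [hD13]; simp [hD1, hT1, smul_smul, ← add_smul]; module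
  have e2 : D13 ψ₂ = ((3/2) : ℝ) • ψ₂ := by
    rw [hD13]; simp [hD2, hT2, smul_smul, ← add_smul]; module
  have o1 : Ω ψ₁ = (-(3/4) : ℝ) • ψ₁ := by
    rw [hΩ]
    simp [LinearMap.comp_apply, e1, map_smul, smul_smul, ← sub_smul]
    module
  have o2 : Ω ψ₂ = (-(3/4) : ℝ) • ψ₂ := by
    rw [hΩ]
    simp [LinearMap.comp_apply, e2, map_smul, smul_smul, ← sub_smul]
    module
  exact ⟨o1, o2, Module.End.hasEigenvalue_of_hasEigenvector ⟨by
    rw [Module.End.mem_eigenspace_iff]; exact o1, hψ₁⟩⟩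
end

section
/- On a 6-dimensional nearly Kähler spin manifold with Scal^g = 15a, the endomorphism 2·dT + Scal of the spinor bundle, where dT = 2a(e₁₂₃₄ + e₁₂₅₆ + e₃₄₅₆) and Scal = Scal^g − (3/2)||T||² = 12a, equals 16a·diag(0,0,1,1,1,1,1,1) in a suitable basis of the 8-dimensional spin representation; in particular it is a non-negative endomorphism with 2-dimensional kernel. -/
/-!
STATEMENT 14: On a 6-dimensional nearly Kähler spin manifold with
`Scal^g = 15a`, the endomorphism `2·dT + Scal` of the spinor bundle, where
`dT = 2a(e₁₂₃₄ + e₁₂₅₆ + e₃₄₅₆)` and `Scal = Scal^g − (3/2)‖T‖² = 12a`,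
equals `16a·diag(0,0,1,1,1,1,1,1)` in a suitable basis of the 8-dimensional
spin representation; in particular it is a non-negative endomorphism with
2-dimensional kernel.

Modelling: `Δ₆ ≅ ℂ⁸` is modelled as an 8-dimensional complex vector space `W`
with Clifford generators `u 0,…,u 5` satisfying `eᵢeⱼ + eⱼeᵢ = −2δᵢⱼ`;
`e_{ijkl}` is the Clifford product `eᵢeⱼe_k e_l`; the operator in question is
`A = 2·dT + 12a = 4a(e₁₂₃₄ + e₁₂₅₆ + e₃₄₅₆) + 12a`.  That `A` is conjugate to
`16a·diag(0,0,1,…,1)` (with `a > 0`) is expressed equivalently as: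
`A` satisfies `A·(A − 16a) = 0` (so `A` is diagonalizable with eigenvalues in
`{0, 16a}`, hence non-negative), its kernel (= eigenspace for `0`) has
dimension 2, and its eigenspace for `16a` has dimension 6. -/

lemma nk_aux_sq {R : Type*} [Ring R] (p q r : R) (hp : p*p = -1) (hq : q*q = -1) (hr : r*r = -1)
    (hpq : p*q = q*p) (hpr : p*r = r*p) (hqr : q*r = r*q) :
    (p*q + p*r + q*r) * (p*q + p*r + q*r) = 3 - 2*(p*q + p*r + q*r) := by
  have h1 : ∀ x : R, q*(p*x) = p*(q*x) := fun x => by rw [← mul_assoc, ← hpq, mul_assoc]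
  have h2 : ∀ x : R, r*(p*x) = p*(r*x) := fun x => by rw [← mul_assoc, ← hpr, mul_assoc]
  have h3 : ∀ x : R, r*(q*x) = q*(r*x) := fun x => by rw [← mul_assoc, ← hqr, mul_assoc]
  have hp' : ∀ x : R, p*(p*x) = -x := fun x => by rw [← mul_assoc, hp, neg_one_mul]
  have hq' : ∀ x : R, q*(q*x) = -x := fun x => by rw [← mul_assoc, hq, neg_one_mul]
  have hr' : ∀ x : R, r*(r*x) = -x := fun x => by rw [← mul_assoc, hr, neg_one_mul]
  simp only [mul_add, add_mul, mul_assoc, h1, h2, h3, hp', hq', hr', ← hpq, ← hpr, ← hqr,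
    hp, hq, hr, mul_neg, neg_neg, mul_one]
  noncomm_ring <;> simp [zsmul_eq_mul]
  abel

lemma nk_trace_zero {W : Type*} [AddCommGroup W] [Module ℂ W]
    (M v : Module.End ℂ W) (hv : v * v = -1) (h : M * v = -(v * M)) :
    LinearMap.trace ℂ W M = 0 := by
  have hvM : v * M = -(M * v) := by rw [h, neg_neg]
  have h1 : (M * v) * v = -M := by rw [mul_assoc, hv, mul_neg_one]
  have h2 : v * (M * v) = M := by rw [← mul_assoc, hvM, neg_mul, h1, neg_neg]
  have h3 := LinearMap.trace_mul_comm ℂ (M * v) v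
  rw [h1, h2, map_neg] at h3
  exact add_self_eq_zero.mp (by linear_combination -h3)

/-- On `Δ₆ ≅ ℂ⁸`, the endomorphism
`2dT + Scal = 4a(e₁₂₃₄+e₁₂₅₆+e₃₄₅₆) + 12a` equals `16a·diag(0,0,1,…,1)` in a
suitable basis: it satisfies `A(A − 16a) = 0`, has 2-dimensional kernel and
6-dimensional eigenspace for `16a`. -/
theorem nearly_kaehler_endomorphism_eigenvalues
    {W : Type*} [AddCommGroup W] [Module ℂ W]
    (hdim : Module.finrank ℂ W = 8)
    (u : Fin 6 → Module.End ℂ W)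
    (hrel : ∀ i j, u i * u j + u j * u i = if i = j then (-2 : ℂ) • 1 else 0)
    (a : ℝ) (ha : 0 < a)
    (dT A : Module.End ℂ W)
    -- `dT = 2a(e₁₂₃₄ + e₁₂₅₆ + e₃₄₅₆)`:
    (hdT : dT = ((2 * a : ℝ) : ℂ) •
      (u 0 * u 1 * u 2 * u 3 + u 0 * u 1 * u 4 * u 5 + u 2 * u 3 * u 4 * u 5))
    -- `A = 2·dT + Scal` with `Scal = 12a`:
    (hA : A = (2 : ℂ) • dT + ((12 * a : ℝ) : ℂ) • 1) :
    A * (A - ((16 * a : ℝ) : ℂ) • 1) = 0 ∧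
    Module.finrank ℂ (Module.End.eigenspace A (0 : ℂ)) = 2 ∧
    Module.finrank ℂ (Module.End.eigenspace A ((16 * a : ℝ) : ℂ)) = 6 := by
  classical
  haveI : FiniteDimensional ℂ W := FiniteDimensional.of_finrank_pos (by rw [hdim]; norm_num)
  -- Clifford relations
  have hsq : ∀ i, u i * u i = -1 := by
    intro i
    have h := hrel i i
    rw [if_pos rfl] at h
    calc u i * u i = (2:ℂ)⁻¹ • (u i * u i + u i * u i) := by
          rw [← two_smul ℂ, smul_smul, inv_mul_cancel₀ two_ne_zero, one_smul]
      _ = (2:ℂ)⁻¹ • ((-2:ℂ) • (1 : Module.End ℂ W)) := by rw [h]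
      _ = -1 := by rw [smul_smul]; norm_num
  have hanti : ∀ i j : Fin 6, i ≠ j → u i * u j = -(u j * u i) := by
    intro i j hij
    have h := hrel i j
    rw [if_neg hij] at h
    exact eq_neg_of_add_eq_zero_left h
  have hmove : ∀ i j k : Fin 6, i ≠ j → i ≠ k → u i * (u j * u k) = (u j * u k) * u i := by
    intro i j k hij hik
    calc u i * (u j * u k) = (u i * u j) * u k := (mul_assoc _ _ _).symm
      _ = (-(u j * u i)) * u k := by rw [hanti i j hij]
      _ = -(u j * (u i * u k)) := by rw [neg_mul, mul_assoc]
      _ = -(u j * (-(u k * u i))) := by rw [hanti i k hik]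
      _ = (u j * u k) * u i := by rw [mul_neg, neg_neg, ← mul_assoc]
  have hpaircomm : ∀ i j k l : Fin 6, i ≠ k → i ≠ l → j ≠ k → j ≠ l →
      (u i * u j) * (u k * u l) = (u k * u l) * (u i * u j) := by
    intro i j k l hik hil hjk hjl
    calc (u i * u j) * (u k * u l) = u i * (u j * (u k * u l)) := mul_assoc _ _ _
      _ = u i * ((u k * u l) * u j) := by rw [hmove j k l hjk hjl]
      _ = (u i * (u k * u l)) * u j := (mul_assoc _ _ _).symm
      _ = ((u k * u l) * u i) * u j := by rw [hmove i k l hik hil]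
      _ = (u k * u l) * (u i * u j) := mul_assoc _ _ _
  have hpairsq : ∀ i j : Fin 6, i ≠ j → (u i * u j) * (u i * u j) = -1 := by
    intro i j hij
    have hinner : u j * (u i * u j) = u i := by
      rw [← mul_assoc, hanti j i (Ne.symm hij), neg_mul, mul_assoc, hsq j, mul_neg_one, neg_neg]
    rw [mul_assoc, hinner, hsq i]
  -- anticommutation used for traces
  have key : ∀ i j k l : Fin 6, i ≠ j → i ≠ k → i ≠ l →
      ((u i * u j) * (u k * u l)) * u i = -(u i * ((u i * u j) * (u k * u l))) := by
    intro i j k l hij hik hil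
    have h1 : (u i * u j) * u i = u j := by
      rw [mul_assoc, hanti j i (Ne.symm hij), mul_neg, ← mul_assoc, hsq i, neg_one_mul, neg_neg]
    have h2 : u i * (u i * u j) = -u j := by
      rw [← mul_assoc, hsq i, neg_one_mul]
    calc ((u i * u j) * (u k * u l)) * u i
        = (u i * u j) * ((u k * u l) * u i) := mul_assoc _ _ _
      _ = (u i * u j) * (u i * (u k * u l)) := by rw [← hmove i k l hik hil]
      _ = ((u i * u j) * u i) * (u k * u l) := (mul_assoc _ _ _).symm
      _ = u j * (u k * u l) := by rw [h1]
      _ = -(u i * ((u i * u j) * (u k * u l))) := by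
          rw [← mul_assoc (u i) (u i * u j) (u k * u l), h2, neg_mul, neg_neg]
  -- abstract operator B
  obtain ⟨B, hBdef⟩ : ∃ B : Module.End ℂ W,
      B = (u 0 * u 1) * (u 2 * u 3) + (u 0 * u 1) * (u 4 * u 5) + (u 2 * u 3) * (u 4 * u 5) :=
    ⟨_, rfl⟩
  have hBe : u 0 * u 1 * u 2 * u 3 + u 0 * u 1 * u 4 * u 5 + u 2 * u 3 * u 4 * u 5 = B := by
    rw [hBdef]; simp only [mul_assoc]
  have hBB : B * B = 3 - 2 * B := by
    rw [hBdef]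
    exact nk_aux_sq _ _ _ (hpairsq 0 1 (by decide)) (hpairsq 2 3 (by decide))
      (hpairsq 4 5 (by decide))
      (hpaircomm 0 1 2 3 (by decide) (by decide) (by decide) (by decide))
      (hpaircomm 0 1 4 5 (by decide) (by decide) (by decide) (by decide))
      (hpaircomm 2 3 4 5 (by decide) (by decide) (by decide) (by decide))
  -- scalars
  obtain ⟨d, hddef⟩ : ∃ d : ℂ, d = 4 * (a : ℂ) := ⟨_, rfl⟩
  have hd : d ≠ 0 := by
    rw [hddef]
    simp only [ne_eq, mul_eq_zero, Complex.ofReal_eq_zero]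
    push_neg
    exact ⟨by norm_num, ne_of_gt ha⟩
  have hthree : (3 : Module.End ℂ W) = (3:ℂ) • 1 := by
    rw [← Algebra.algebraMap_eq_smul_one]
    exact (map_ofNat _ 3).symm
  have hc1 : (2:ℂ) * ((2*a:ℝ):ℂ) = d := by rw [hddef]; push_cast; ring
  have hc2 : ((12*a:ℝ):ℂ) = 3 * d := by rw [hddef]; push_cast; ring
  have h16 : ((16*a:ℝ):ℂ) = 4 * d := by rw [hddef]; push_cast; ring
  have hA2 : A = d • B + (3*d) • (1 : Module.End ℂ W) := by
    rw [hA, hdT, hBe, smul_smul, hc1, hc2]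
  have hApos : A = d • (B + 3) := by
    rw [hA2, smul_add, hthree, smul_smul, mul_comm d 3]
  have hAneg : A - ((16*a:ℝ):ℂ) • 1 = d • (B - 1) := by
    rw [hA2, h16, smul_sub]
    module
  -- algebraic identities
  have hz1 : (B + 3) * (B - 1) = 0 := by
    have e : (B + 3) * (B - 1) = B * B + 2 * B - 3 := by noncomm_ring <;> simp [zsmul_eq_mul]
    rw [e, hBB]; noncomm_ring <;> simp [zsmul_eq_mul]
  have hz2 : (B - 1) * ((4:ℂ)⁻¹ • (B + 3)) = 0 := by
    have e : (B - 1) * (B + 3) = B * B + 2 * B - 3 := by noncomm_ring <;> simp [zsmul_eq_mul]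
    rw [mul_smul_comm, e, hBB]
    rw [show (3:Module.End ℂ W) - 2*B + 2*B - 3 = 0 by noncomm_ring <;> simp [zsmul_eq_mul], smul_zero]
  have hz3 : (B + 3) * ((4:ℂ)⁻¹ • ((1 : Module.End ℂ W) - B)) = 0 := by
    have e : (B + 3) * ((1 : Module.End ℂ W) - B) = -(B * B) - 2 * B + 3 := by noncomm_ring <;> simp [zsmul_eq_mul]
    rw [mul_smul_comm, e, hBB]
    rw [show -((3:Module.End ℂ W) - 2*B) - 2*B + 3 = 0 by noncomm_ring <;> simp [zsmul_eq_mul], smul_zero]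
  have part1 : A * (A - ((16 * a : ℝ) : ℂ) • 1) = 0 := by
    rw [hAneg, hApos, smul_mul_assoc, mul_smul_comm, hz1, smul_zero, smul_zero]
  -- eigenspaces as kernels
  have hker0 : Module.End.eigenspace A (0:ℂ) = LinearMap.ker (B + 3) := by
    rw [Module.End.eigenspace_def, zero_smul, sub_zero, hApos]
    exact LinearMap.ker_smul _ d hd
  have hker16 : Module.End.eigenspace A ((16*a:ℝ):ℂ) = LinearMap.ker (B - 1) := by
    rw [Module.End.eigenspace_def, hAneg]
    exact LinearMap.ker_smul _ d hd
  -- projections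
  have hprojT : LinearMap.IsProj (LinearMap.ker (B + 3))
      ((4:ℂ)⁻¹ • ((1 : Module.End ℂ W) - B)) := by
    constructor
    · intro x
      rw [LinearMap.mem_ker]
      have := congrArg (fun f : Module.End ℂ W => f x) hz3
      simpa [Module.End.mul_apply] using this
    · intro x hx
      rw [LinearMap.mem_ker] at hx
      have hBx : B x = -((3:ℂ) • x) := by
        apply eq_neg_of_add_eq_zero_left
        calc B x + (3:ℂ) • x = (B + 3) x := by
              rw [LinearMap.add_apply, hthree, LinearMap.smul_apply, Module.End.one_apply]
          _ = 0 := hx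
      show ((4:ℂ)⁻¹ • ((1 : Module.End ℂ W) - B)) x = x
      rw [LinearMap.smul_apply, LinearMap.sub_apply, Module.End.one_apply, hBx, sub_neg_eq_add,
        show x + (3:ℂ) • x = (4:ℂ) • x by module,
        smul_smul, inv_mul_cancel₀ (by norm_num : (4:ℂ) ≠ 0), one_smul]
  have hprojS : LinearMap.IsProj (LinearMap.ker (B - 1))
      ((4:ℂ)⁻¹ • (B + 3)) := by
    constructor
    · intro x
      rw [LinearMap.mem_ker]
      have := congrArg (fun f : Module.End ℂ W => f x) hz2
      simpa [Module.End.mul_apply] using this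
    · intro x hx
      rw [LinearMap.mem_ker] at hx
      have hBx : B x = x := by
        have : B x - x = 0 := by
          calc B x - x = (B - 1) x := by rw [LinearMap.sub_apply, Module.End.one_apply]
            _ = 0 := hx
        exact sub_eq_zero.mp this
      show ((4:ℂ)⁻¹ • (B + 3)) x = x
      rw [LinearMap.smul_apply, LinearMap.add_apply, hthree, LinearMap.smul_apply,
        Module.End.one_apply, hBx,
        show x + (3:ℂ) • x = (4:ℂ) • x by module,
        smul_smul, inv_mul_cancel₀ (by norm_num : (4:ℂ) ≠ 0), one_smul]
  -- traces
  have htrB : LinearMap.trace ℂ W B = 0 := by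
    rw [hBdef, map_add, map_add,
      nk_trace_zero _ (u 0) (hsq 0) (key 0 1 2 3 (by decide) (by decide) (by decide)),
      nk_trace_zero _ (u 0) (hsq 0) (key 0 1 4 5 (by decide) (by decide) (by decide)),
      nk_trace_zero _ (u 2) (hsq 2) (key 2 3 4 5 (by decide) (by decide) (by decide))]
    ring
  have htr1 : LinearMap.trace ℂ W 1 = 8 := by
    rw [LinearMap.trace_one, hdim]; norm_num
  have htrT : LinearMap.trace ℂ W ((4:ℂ)⁻¹ • ((1 : Module.End ℂ W) - B)) = 2 := by
    rw [map_smul, map_sub, htr1, htrB]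
    norm_num
  have htrS : LinearMap.trace ℂ W ((4:ℂ)⁻¹ • (B + 3)) = 6 := by
    rw [map_smul, map_add, htrB, hthree, map_smul, htr1]
    norm_num
  have hdimT : Module.finrank ℂ (LinearMap.ker (B + 3)) = 2 := by
    have := hprojT.trace
    rw [htrT] at this
    exact_mod_cast this.symm
  have hdimS : Module.finrank ℂ (LinearMap.ker (B - 1)) = 6 := by
    have := hprojS.trace
    rw [htrS] at this
    exact_mod_cast this.symm
  exact ⟨part1, by rw [hker0]; exact hdimT, by rw [hker16]; exact hdimS⟩
end
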